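/- For every f ∈ Bir(P^n), the centralizer {g ∈ Bir(P^n) : g∘f = f∘g} is closed in the Zariski topology. Consequently, for every subgroup G ⊆ Bir(P^n), the centralizer C_{Bir(P^n)}(G) = {g : g∘h = h∘g for all h ∈ G} is closed. -/

import Mathlib

open MvPolynomial

/-- The rational function field `k(z_1,…,z_n)`, realized as the fraction field of the
polynomial ring in `n` variables over `k`. -/
abbrev RatFunField (k : Type) [Field k] (n : ℕ) : Type :=
  FractionRing (MvPolynomial (Fin n) k)

/-- The Cremona group `Bir(ℙⁿ)`, realized as the group of `k`-algebra automorphisms of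
the rational function field `k(z_1,…,z_n)`. -/
abbrev Cremona (k : Type) [Field k] (n : ℕ) : Type :=
  RatFunField k n ≃ₐ[k] RatFunField k n

variable (k : Type) [Field k]

/-- The coordinate function `z_{j+1}` of `k(z_1,…,z_n)`. -/
noncomputable def zCoord (n : ℕ) (j : Fin n) : RatFunField k n :=
  algebraMap (MvPolynomial (Fin n) k) (RatFunField k n) (X j)

/-- Dehomogenization: `g(x_0,…,x_n) ↦ g(1, z_1, …, z_n)`. -/
noncomputable def dehom (n : ℕ) : MvPolynomial (Fin (n + 1)) k →ₐ[k] RatFunField k n :=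
  aeval (Fin.cons 1 (zCoord k n))

/-- `g = (g_0,…,g_n)` is a representation of the Cremona transformation `f` by homogeneous
polynomials of degree `d`: the `g_i` are homogeneous of degree `d`, `g_0 ≠ 0`, and
`f(z_j) = g_j(1,z_1,…,z_n)/g_0(1,z_1,…,z_n)` for all `j`. -/
def Represents (n : ℕ) (f : Cremona k n) (d : ℕ)
    (g : Fin (n + 1) → MvPolynomial (Fin (n + 1)) k) : Prop :=
  (∀ i, (g i).IsHomogeneous d) ∧ g 0 ≠ 0 ∧
    ∀ j : Fin n, f (zCoord k n j) * dehom k n (g 0) = dehom k n (g j.succ)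

/-- The (algebraic) degree of a Cremona transformation: the least `d ≥ 1` such that `f`
admits a representation by homogeneous polynomials of degree `d` (without common factor,
which is automatic at the minimal degree). -/
noncomputable def cdeg (n : ℕ) (f : Cremona k n) : ℕ :=
  sInf {d | 1 ≤ d ∧ ∃ g, Represents k n f d g}

/-- An affine `k`-variety: the maximal spectrum (= set of `k`-points) of a finitely
generated `k`-algebra `A`. -/
structure AffSource (k : Type) [Field k] : Type 1 where
  A : Type
  [cr : CommRing A]
  [alg : Algebra k A]
  [ft : Algebra.FiniteType k A]

attribute [instance] AffSource.cr AffSource.alg AffSource.ft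

/-- The points (with residue field `k`) of an affine `k`-variety, i.e. the `k`-algebra
homomorphisms `A → k`; by the Nullstellensatz these correspond to the maximal ideals. -/
abbrev AffSource.Pts (S : AffSource k) : Type := S.A →ₐ[k] k

/-- The Zariski topology on the points of an affine variety, induced from the Zariski
topology of the prime spectrum via `t ↦ ker t`. -/
noncomputable instance AffSource.ptsTopology (S : AffSource k) : TopologicalSpace S.Pts :=
  TopologicalSpace.induced
    (fun t : S.Pts =>
      (⟨RingHom.ker (t : S.A →+* k), RingHom.ker_isPrime _⟩ : PrimeSpectrum S.A))
    inferInstance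

/-- `φ` is given by the polynomial family `F = (F_0,…,F_n)`, homogeneous of common degree
`ℓ` in `x_0,…,x_n` with coefficients in `A`, on the basic open subset `D(a)`: for every
point `t` with `a(t) ≠ 0`, the evaluated polynomials `F_i(t,·)` are not all zero and
`φ_t(z_j)·F_0(t,1,z_1,…,z_n) = F_j(t,1,z_1,…,z_n)` for all `j`. -/
def IsFamilyOn (n : ℕ) (S : AffSource k) (φ : S.Pts → Cremona k n) (a : S.A)
    (ℓ : ℕ) (F : Fin (n + 1) → MvPolynomial (Fin (n + 1)) S.A) : Prop :=
  (∀ i, (F i).IsHomogeneous ℓ) ∧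
    ∀ t : S.Pts, t a ≠ 0 →
      (∃ i, MvPolynomial.map (t : S.A →+* k) (F i) ≠ 0) ∧
        ∀ j : Fin n,
          φ t (zCoord k n j) * dehom k n (MvPolynomial.map (t : S.A →+* k) (F 0)) =
            dehom k n (MvPolynomial.map (t : S.A →+* k) (F j.succ))

/-- A morphism `T → Bir(ℙⁿ)` from an affine `k`-variety `T`: a map which, locally on a
cover of `T` by basic open subsets, is given by a polynomial family of Cremona
transformations. -/
def IsMorphism (n : ℕ) (S : AffSource k) (φ : S.Pts → Cremona k n) : Prop :=
  ∀ t : S.Pts, ∃ a : S.A, t a ≠ 0 ∧ ∃ ℓ F, IsFamilyOn k n S φ a ℓ F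

/-- The Zariski topology on the Cremona group: the finest topology making every morphism
from a `k`-variety to `Bir(ℙⁿ)` continuous.  (A subset is closed if and only if its
preimage under every such morphism is closed.) -/
noncomputable instance cremonaTopology (n : ℕ) : TopologicalSpace (Cremona k n) :=
  ⨆ (S : AffSource k) (φ : { φ : S.Pts → Cremona k n // IsMorphism k n S φ }),
    TopologicalSpace.coinduced φ.1 inferInstance

/-! Write `f = (G_0 : ⋯ : G_n)` with homogeneous `G_i`, and let a morphism `φ` be given on a basic
open set `D(a)` by a family `F` with coefficients in `A`. Since dehomogenization is injective on
homogeneous polynomials of a fixed degree, `φ_t` commutes with `f` exactly when the homogeneous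
polynomials `G_{j+1}(F_t) · F_{t,0}(G) - F_{t,j+1}(G) · G_0(F_t)` vanish. These are the
specializations at `t` of polynomials over `A`, so the commuting locus is closed in `D(a)`; as
closedness is local, `φ⁻¹` of the centralizer of `f` is closed. The centralizer of a subgroup is an
intersection of such sets. -/

namespace MvPolynomial

variable {R S σ : Type*} [CommSemiring R] [CommSemiring S] [Algebra R S]

theorem IsHomogeneous.aeval_mul {p : MvPolynomial σ R} {m : ℕ} (hp : p.IsHomogeneous m)
    (c : S) (w : σ → S) :
    MvPolynomial.aeval (fun i => c * w i) p = c ^ m * MvPolynomial.aeval w p := by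
  conv_lhs => rw [p.as_sum]
  conv_rhs => rw [p.as_sum]
  simp only [map_sum, aeval_monomial, Finset.mul_sum]
  refine Finset.sum_congr rfl fun d hd => ?_
  have hdeg : d.degree = m := by
    rw [Finsupp.degree_eq_weight_one]; exact hp (mem_support_iff.mp hd)
  simp only [Finsupp.prod, mul_pow, Finset.prod_mul_distrib, Finset.prod_pow_eq_pow_sum,
    ← Finsupp.degree_apply, hdeg]
  ring

variable {n : ℕ}

theorem aeval_cons_one (v : Fin n → S) (p : MvPolynomial (Fin (n + 1)) R) :
    aeval (Fin.cons 1 v) p =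
      aeval v (aeval (Fin.cons 1 X : Fin (n + 1) → MvPolynomial (Fin n) R) p) := by
  rw [comp_aeval_apply]
  congr
  funext i
  refine Fin.cases ?_ (fun j => ?_) i <;> simp

theorem IsHomogeneous.aeval_eq_pow_mul {K : Type*} [Field K] [Algebra R K]
    {p : MvPolynomial (Fin (n + 1)) R} {m : ℕ} (hp : p.IsHomogeneous m)
    (x : Fin (n + 1) → K) (hx : x 0 ≠ 0) :
    MvPolynomial.aeval x p =
      x 0 ^ m * MvPolynomial.aeval (Fin.cons 1 fun j => x j.succ / x 0) p := by
  rw [← hp.aeval_mul]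
  congr
  funext i
  refine Fin.cases ?_ (fun j => ?_) i
  · simp
  · simp [mul_div_cancel₀ _ hx]

theorem exists_isHomogeneous_aeval_cons_one_eq (r : MvPolynomial (Fin n) R) {N : ℕ}
    (hN : r.totalDegree ≤ N) :
    ∃ h : MvPolynomial (Fin (n + 1)) R, h.IsHomogeneous N ∧ aeval (Fin.cons 1 X) h = r := by
  refine ⟨∑ i ∈ Finset.range (N + 1),
    X 0 ^ (N - i) * rename Fin.succ (homogeneousComponent i r), ?_, ?_⟩
  · refine IsHomogeneous.sum _ _ _ fun i hi => ?_
    have := (isHomogeneous_X_pow (R := R) (0 : Fin (n + 1)) (N - i)).mul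
      ((homogeneousComponent_isHomogeneous i r).rename_isHomogeneous (f := Fin.succ))
    rwa [Nat.sub_add_cancel (Nat.lt_succ_iff.mp (Finset.mem_range.mp hi))] at this
  · have hcomp : (Fin.cons 1 X : Fin (n + 1) → MvPolynomial (Fin n) R) ∘ Fin.succ = X := by
      funext j; simp
    simp only [map_sum, map_mul, map_pow, aeval_X, Fin.cons_zero, one_pow, one_mul,
      aeval_rename, hcomp, aeval_X_left_apply]
    rw [← Finset.sum_subset (Finset.range_subset_range.mpr (Nat.succ_le_succ hN)),
      sum_homogeneousComponent]
    intro i _ hi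
    exact homogeneousComponent_eq_zero _ _ (by simpa using hi)

end MvPolynomial

section Dehomogenization

variable {k} {n : ℕ}

theorem dehom_eq_algebraMap_aeval (p : MvPolynomial (Fin (n + 1)) k) :
    dehom k n p = algebraMap (MvPolynomial (Fin n) k) (RatFunField k n)
      (aeval (Fin.cons 1 X : Fin (n + 1) → MvPolynomial (Fin n) k) p) := by
  rw [dehom, aeval_cons_one]
  exact (AlgHom.congr_fun (aeval_unique (IsScalarTower.toAlgHom k _ (RatFunField k n))) _).symm

theorem dehom_eq_zero_iff {p : MvPolynomial (Fin (n + 1)) k} {m : ℕ}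
    (hp : p.IsHomogeneous m) : dehom k n p = 0 ↔ p = 0 := by
  refine ⟨fun h => ?_, fun h => h ▸ map_zero _⟩
  have h' : aeval (Fin.cons 1 X : Fin (n + 1) → MvPolynomial (Fin n) k) p = 0 :=
    IsFractionRing.injective _ (RatFunField k n)
      (by rw [← dehom_eq_algebraMap_aeval, h, map_zero])
  -- Rescale inside the fraction field of `k[x₀, …, xₙ]`, where `x₀` is invertible.
  set L := FractionRing (MvPolynomial (Fin (n + 1)) k)
  set x : Fin (n + 1) → L := fun i => algebraMap (MvPolynomial (Fin (n + 1)) k) L (X i)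
  have hx : x 0 ≠ 0 := (IsFractionRing.to_map_ne_zero_of_mem_nonZeroDivisors
    (mem_nonZeroDivisors_of_ne_zero (X_ne_zero 0)))
  apply IsFractionRing.injective _ L
  rw [map_zero, ← IsScalarTower.coe_toAlgHom' k, ← aeval_X_left_apply p, comp_aeval_apply]
  change aeval x p = 0
  rw [hp.aeval_eq_pow_mul x hx, aeval_cons_one, h', map_zero, mul_zero]

theorem RatFunField.algHom_ext {L : Type*} [Semiring L] [Algebra k L]
    {φ₁ φ₂ : RatFunField k n →ₐ[k] L} (h : ∀ j, φ₁ (zCoord k n j) = φ₂ (zCoord k n j)) :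
    φ₁ = φ₂ :=
  IsLocalization.algHom_ext (nonZeroDivisors _) (MvPolynomial.algHom_ext h)

theorem Cremona.commute_iff {f g : Cremona k n} :
    g * f = f * g ↔ ∀ j, g (f (zCoord k n j)) = f (g (zCoord k n j)) := by
  refine ⟨fun h j => by rw [← AlgEquiv.mul_apply, h, AlgEquiv.mul_apply], fun h => ?_⟩
  exact AlgEquiv.coe_toAlgHom_injective (RatFunField.algHom_ext h)

end Dehomogenization

/-- If `F` represents `g` and `G` represents `f`, then `g ∘ f` and `f ∘ g` send `z_{j+1}` to
`G_{j+1}(F) / G_0(F)` and `F_{j+1}(G) / F_0(G)`; this is the cross-multiplied difference. -/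
noncomputable def commutationPoly {R : Type*} [CommRing R] {n : ℕ}
    (F G : Fin (n + 1) → MvPolynomial (Fin (n + 1)) R) (j : Fin n) :
    MvPolynomial (Fin (n + 1)) R :=
  bind₁ F (G j.succ) * bind₁ G (F 0) - bind₁ G (F j.succ) * bind₁ F (G 0)

theorem map_commutationPoly {R S : Type*} [CommRing R] [CommRing S] (φ : R →+* S) {n : ℕ}
    (F G : Fin (n + 1) → MvPolynomial (Fin (n + 1)) R) (j : Fin n) :
    map φ (commutationPoly F G j) =
      commutationPoly (fun i => map φ (F i)) (fun i => map φ (G i)) j := by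
  simp only [commutationPoly, map_sub, map_mul, map_bind₁]

namespace Represents

variable {k} {n : ℕ} {f g : Cremona k n} {d ℓ : ℕ}
  {F G : Fin (n + 1) → MvPolynomial (Fin (n + 1)) k}

theorem dehom_zero_ne_zero (hG : Represents k n f d G) : dehom k n (G 0) ≠ 0 :=
  (dehom_eq_zero_iff (hG.1 0)).not.mpr hG.2.1

theorem apply_zCoord (hG : Represents k n f d G) (j : Fin n) :
    f (zCoord k n j) = dehom k n (G j.succ) / dehom k n (G 0) :=
  eq_div_of_mul_eq hG.dehom_zero_ne_zero (hG.2.2 j)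

theorem dehom_bind₁ (hF : Represents k n g ℓ F) {h : MvPolynomial (Fin (n + 1)) k} {e : ℕ}
    (hh : h.IsHomogeneous e) :
    dehom k n (bind₁ F h) = dehom k n (F 0) ^ e * g (dehom k n h) := by
  have hF' : (fun i => dehom k n (F i)) =
      fun i => dehom k n (F 0) *
        Fin.cons (α := fun _ => RatFunField k n) 1 (fun j => g (zCoord k n j)) i := by
    funext i
    refine Fin.cases (by simp) (fun j => ?_) i
    rw [Fin.cons_succ, hF.apply_zCoord, mul_div_cancel₀ _ hF.dehom_zero_ne_zero]
  rw [bind₁, comp_aeval_apply, hF', hh.aeval_mul, dehom, ← AlgEquiv.coe_toAlgHom,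
    comp_aeval_apply]
  congr 3
  funext i
  refine Fin.cases (by simp) (fun j => by simp) i

theorem apply_apply_zCoord (hF : Represents k n g ℓ F) (hG : Represents k n f d G)
    (j : Fin n) :
    g (f (zCoord k n j)) = dehom k n (bind₁ F (G j.succ)) / dehom k n (bind₁ F (G 0)) := by
  rw [hF.dehom_bind₁ (hG.1 _), hF.dehom_bind₁ (hG.1 0), mul_div_mul_left _ _
    (pow_ne_zero _ hF.dehom_zero_ne_zero), hG.apply_zCoord, map_div₀]

theorem dehom_bind₁_zero_ne_zero (hF : Represents k n g ℓ F) (hG : Represents k n f d G) :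
    dehom k n (bind₁ F (G 0)) ≠ 0 := by
  rw [hF.dehom_bind₁ (hG.1 0)]
  exact mul_ne_zero (pow_ne_zero _ hF.dehom_zero_ne_zero)
    ((map_ne_zero_iff _ g.injective).mpr hG.dehom_zero_ne_zero)

theorem commute_iff (hF : Represents k n g ℓ F) (hG : Represents k n f d G) :
    g * f = f * g ↔ ∀ j, commutationPoly F G j = 0 := by
  have hhom : ∀ j, (commutationPoly F G j).IsHomogeneous (ℓ * d + d * ℓ) := fun j =>
    (((hG.1 j.succ).aeval F hF.1).mul ((hF.1 0).aeval G hG.1)).sub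
      (add_comm (d * ℓ) (ℓ * d) ▸ ((hF.1 j.succ).aeval G hG.1).mul ((hG.1 0).aeval F hF.1))
  refine Cremona.commute_iff.trans (forall_congr' fun j => ?_)
  rw [← dehom_eq_zero_iff (hhom j), hF.apply_apply_zCoord hG, hG.apply_apply_zCoord hF,
    div_eq_div_iff (hF.dehom_bind₁_zero_ne_zero hG) (hG.dehom_bind₁_zero_ne_zero hF),
    commutationPoly, map_sub, map_mul, map_mul, sub_eq_zero]

end Represents

section Families

variable {k} {n : ℕ}

theorem exists_represents (f : Cremona k n) : ∃ d G, Represents k n f d G := by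
  obtain ⟨b, hb⟩ := IsLocalization.exist_integer_multiples_of_finite
    (nonZeroDivisors (MvPolynomial (Fin n) k)) fun j => f (zCoord k n j)
  choose r hr using hb
  set N := (b : MvPolynomial (Fin n) k).totalDegree ⊔ Finset.univ.sup fun j => (r j).totalDegree
  obtain ⟨B, hBhom, hB⟩ := exists_isHomogeneous_aeval_cons_one_eq (b : MvPolynomial (Fin n) k)
    (N := N) le_sup_left
  choose P hPhom hP using fun j => exists_isHomogeneous_aeval_cons_one_eq (r j) (N := N)
    (le_sup_of_le_right (Finset.le_sup (f := fun j => (r j).totalDegree) (Finset.mem_univ j)))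
  refine ⟨N, Fin.cons B P, fun i => Fin.cases hBhom hPhom i, fun hB0 => ?_, fun j => ?_⟩
  · refine nonZeroDivisors.ne_zero b.2 ?_
    rw [← hB, show B = 0 from hB0, map_zero]
  · simp only [Fin.cons_zero, Fin.cons_succ, dehom_eq_algebraMap_aeval, hB, hP, hr,
      Algebra.smul_def, mul_comm]

variable {S : AffSource k} {φ : S.Pts → Cremona k n} {a : S.A} {ℓ : ℕ}
  {F : Fin (n + 1) → MvPolynomial (Fin (n + 1)) S.A}

theorem IsFamilyOn.represents (hF : IsFamilyOn k n S φ a ℓ F) {t : S.Pts} (ht : t a ≠ 0) :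
    Represents k n (φ t) ℓ fun i => map (t : S.A →+* k) (F i) := by
  obtain ⟨⟨i, hi⟩, hrel⟩ := hF.2 t ht
  have hhom : ∀ i, (map (t : S.A →+* k) (F i)).IsHomogeneous ℓ := fun i => (hF.1 i).map _
  refine ⟨hhom, fun (h0 : map (t : S.A →+* k) (F 0) = 0) => hi ?_, hrel⟩
  rw [← dehom_eq_zero_iff (hhom i)]
  induction i using Fin.cases with
  | zero => rw [h0, map_zero]
  | succ j => rw [← hrel j, h0, map_zero, mul_zero]

theorem IsFamilyOn.commute_iff (hF : IsFamilyOn k n S φ a ℓ F) {f : Cremona k n} {d : ℕ}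
    {G : Fin (n + 1) → MvPolynomial (Fin (n + 1)) k} (hG : Represents k n f d G) {t : S.Pts}
    (ht : t a ≠ 0) :
    φ t * f = f * φ t ↔ ∀ j, map (t : S.A →+* k)
      (commutationPoly F (fun i => map (algebraMap k S.A) (G i)) j) = 0 := by
  have ht_comp : (t : S.A →+* k).comp (algebraMap k S.A) = RingHom.id k := by
    rw [AlgHom.comp_algebraMap, Algebra.algebraMap_self]
  simp only [(hF.represents ht).commute_iff hG, map_commutationPoly, map_map, ht_comp, map_id]

end Families

theorem isClosed_of_forall_exists_isOpen_inter_eq {X : Type*} [TopologicalSpace X] {s : Set X}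
    (h : ∀ x, ∃ U, IsOpen U ∧ x ∈ U ∧ ∃ Z, IsClosed Z ∧ U ∩ s = U ∩ Z) : IsClosed s := by
  rw [← isOpen_compl_iff, isOpen_iff_forall_mem_open]
  intro x hx
  obtain ⟨U, hU, hxU, Z, hZ, hUs⟩ := h x
  have hxZ : x ∉ Z := fun hxZ => hx (hUs ▸ ⟨hxU, hxZ⟩ : x ∈ U ∩ s).2
  refine ⟨U ∩ Zᶜ, fun y ⟨hyU, hyZ⟩ hys => hyZ (hUs ▸ ⟨hyU, hys⟩ : y ∈ U ∩ Z).2,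
    hU.inter hZ.isOpen_compl, hxU, hxZ⟩

namespace AffSource

variable {k} {S : AffSource k}

theorem isClosed_setOf_apply_eq_zero (b : S.A) : IsClosed {t : S.Pts | t b = 0} := by
  have hpre : {t : S.Pts | t b = 0} = (fun t : S.Pts =>
      (⟨RingHom.ker (t : S.A →+* k), RingHom.ker_isPrime _⟩ : PrimeSpectrum S.A)) ⁻¹'
        PrimeSpectrum.zeroLocus {b} := by
    ext t
    simp [PrimeSpectrum.mem_zeroLocus, RingHom.mem_ker]
  rw [hpre]
  exact (PrimeSpectrum.isClosed_zeroLocus _).preimage continuous_induced_dom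

theorem isOpen_setOf_apply_ne_zero (b : S.A) : IsOpen {t : S.Pts | t b ≠ 0} :=
  (isClosed_setOf_apply_eq_zero b).isOpen_compl

theorem isClosed_setOf_map_eq_zero {σ : Type*} (c : MvPolynomial σ S.A) :
    IsClosed {t : S.Pts | map (t : S.A →+* k) c = 0} := by
  have hcoeff : {t : S.Pts | map (t : S.A →+* k) c = 0} =
      ⋂ m, {t : S.Pts | t (coeff m c) = 0} := by
    ext t
    simp [MvPolynomial.ext_iff, coeff_map]
  rw [hcoeff]
  exact isClosed_iInter fun m => isClosed_setOf_apply_eq_zero _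

end AffSource

namespace Cremona

variable {k} {n : ℕ}

theorem isClosed_of_isClosed_preimage {C : Set (Cremona k n)}
    (h : ∀ (S : AffSource k) (φ : S.Pts → Cremona k n), IsMorphism k n S φ →
      IsClosed (φ ⁻¹' C)) :
    IsClosed C :=
  isClosed_iSup_iff.mpr fun S => isClosed_iSup_iff.mpr fun φ =>
    isClosed_coinduced.mpr (h S φ.1 φ.2)

theorem isClosed_setOf_commute (f : Cremona k n) :
    IsClosed {g : Cremona k n | g * f = f * g} := by
  obtain ⟨d, G, hG⟩ := exists_represents f
  refine isClosed_of_isClosed_preimage fun S φ hφ =>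
    isClosed_of_forall_exists_isOpen_inter_eq fun t₀ => ?_
  obtain ⟨a, ha, ℓ, F, hF⟩ := hφ t₀
  refine ⟨_, AffSource.isOpen_setOf_apply_ne_zero a, ha, _, isClosed_iInter fun j =>
    AffSource.isClosed_setOf_map_eq_zero
      (commutationPoly F (fun i => map (algebraMap k S.A) (G i)) j), ?_⟩
  ext t
  simp only [Set.mem_inter_iff, Set.mem_ofPred_eq, Set.mem_preimage, Set.mem_iInter]
  exact and_congr_right (hF.commute_iff hG)

end Cremona

theorem centralizer_isClosed_general (k : Type) [Field k] (n : ℕ) :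
    (∀ f : Cremona k n, IsClosed {g : Cremona k n | g * f = f * g}) ∧
    ∀ G : Subgroup (Cremona k n),
      IsClosed ((Subgroup.centralizer (G : Set (Cremona k n))) : Set (Cremona k n)) := by
  refine ⟨Cremona.isClosed_setOf_commute, fun G => ?_⟩
  have hcentralizer : (Subgroup.centralizer (G : Set (Cremona k n)) : Set (Cremona k n)) =
      ⋂ h ∈ (G : Set (Cremona k n)), {g | g * h = h * g} := by
    ext g
    simp [Subgroup.mem_centralizer_iff, eq_comm]
  rw [hcentralizer]
  exact isClosed_biInter fun h _ => Cremona.isClosed_setOf_commute h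

/-- The centralizer of an element of `Bir(ℙⁿ)` is closed in the Zariski topology;
consequently the centralizer of any subgroup of `Bir(ℙⁿ)` is closed. -/
theorem centralizer_isClosed (k : Type) [Field k] [IsAlgClosed k] (n : ℕ) (hn : 1 ≤ n) :
    (∀ f : Cremona k n, IsClosed {g : Cremona k n | g * f = f * g}) ∧
    ∀ G : Subgroup (Cremona k n),
      IsClosed ((Subgroup.centralizer (G : Set (Cremona k n))) : Set (Cremona k n)) :=
  centralizer_isClosed_general k n
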